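/- arXiv:2108.05546 — 2 statements merged into one kernel-verified Lean document; each statement's English description precedes it below -/
import Mathlib

section
/- Let C be a finite set of complexes and R ⊆ C × C a finite reaction set with (y, y) ∉ R for all y ∈ C. Suppose R is weakly reversible and {R_1, …, R_k} is an incidence independent decomposition of R. Then each subnetwork is weakly reversible, i.e., each R_i is a weakly reversible subset of reactions. -/
/-- A set `E` of reactions is weakly reversible if for every reaction `(y, y') ∈ E`, the
complex `y` is reachable from `y'` under the reflexive-transitive closure of the relation
"there is a reaction in `E` from `a` to `b`". -/
def WeaklyReversible {C : Type*} (E : Finset (C × C)) : Prop :=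
  ∀ p ∈ E, Relation.ReflTransGen (fun a b => (a, b) ∈ E) p.2 p.1

/-- A decomposition of the reaction set `R`: a collection of nonempty pairwise disjoint
subsets of `R` whose union is `R`. -/
def IsDecompositionOf {C : Type*} [DecidableEq C] (R : Finset (C × C))
    (D : Finset (Finset (C × C))) : Prop :=
  (∀ E ∈ D, E.Nonempty) ∧ (D : Set (Finset (C × C))).PairwiseDisjoint id ∧ D.sup id = R

/-- The range of the restriction of the incidence map to the functions supported on a
reaction subset `E`: the span of the incidence vectors `e_{y'} - e_y` for `(y, y') ∈ E`. -/
def incidenceSpan {C : Type*} [DecidableEq C] (E : Finset (C × C)) :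
    Submodule ℝ (C → ℝ) :=
  Submodule.span ℝ
    ((fun p : C × C => (Pi.single p.2 (1 : ℝ) - Pi.single p.1 (1 : ℝ))) '' (E : Set (C × C)))

/-- A decomposition is incidence independent if the range of the incidence map is the
internal direct sum of the ranges of the restricted incidence maps of the blocks. -/
def IsIncidenceIndependent {C : Type*} [DecidableEq C] (R : Finset (C × C))
    (D : Finset (Finset (C × C))) : Prop :=
  iSupIndep (fun E : {E // E ∈ D} => incidenceSpan (E : Finset (C × C))) ∧
    (⨆ E : {E // E ∈ D}, incidenceSpan (E : Finset (C × C))) = incidenceSpan R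

/-!
Follow a path from `y'` back to `y` in `R` and close it with the reaction `(y, y')`: the result is
a nonnegative circulation on `R`, i.e. nonnegative reaction weights whose weighted incidence vectors
sum to zero, with positive weight on `(y, y')`. Grouping that sum by blocks of the decomposition,
incidence independence forces the part over each block to vanish, so the weights restricted to the
block `E` containing `(y, y')` form a circulation on `E`. Finally, a circulation cannot push
positive weight into a set of complexes that no reaction of `E` leaves, such as the set of
complexes reachable from `y'` in `E`; hence `y` lies in that set.
-/

open Finset

lemma sum_add_single_smul {α M : Type*} [DecidableEq α] [AddCommMonoid M] [Module ℝ M]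
    {s : Finset α} {p : α} (hp : p ∈ s) (f : α → ℝ) (g : α → M) :
    ∑ q ∈ s, (f + Pi.single p 1 : α → ℝ) q • g q = ∑ q ∈ s, f q • g q + g p := by
  simp only [Pi.add_apply, add_smul, sum_add_distrib, Pi.single_apply, ite_smul, one_smul,
    zero_smul, sum_ite_eq', hp, if_true]

section

variable {C : Type*} [DecidableEq C]

noncomputable def incidenceVector (p : C × C) : C → ℝ :=
  Pi.single p.2 1 - Pi.single p.1 1

def IsCirculation (E : Finset (C × C)) (f : C × C → ℝ) : Prop :=
  0 ≤ f ∧ ∑ q ∈ E, f q • incidenceVector q = 0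

lemma sum_incidenceVector_apply (S : Finset C) (p : C × C) :
    ∑ c ∈ S, incidenceVector p c =
      (if p.2 ∈ S then 1 else 0) - (if p.1 ∈ S then 1 else 0) := by
  simp only [incidenceVector, Pi.sub_apply, sum_sub_distrib, sum_pi_single']

lemma exists_nonneg_weights_of_reflTransGen {R : Finset (C × C)} {a b : C}
    (h : Relation.ReflTransGen (fun a b => (a, b) ∈ R) a b) :
    ∃ f : C × C → ℝ, 0 ≤ f ∧
      ∑ q ∈ R, f q • incidenceVector q = Pi.single b 1 - Pi.single a 1 := by
  induction h with
  | refl => exact ⟨0, le_rfl, by simp⟩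
  | @tail b c _ hbc ih =>
    obtain ⟨f, hf0, hf⟩ := ih
    refine ⟨f + Pi.single (b, c) 1, add_nonneg hf0 (Pi.single_nonneg.2 zero_le_one), ?_⟩
    rw [sum_add_single_smul hbc, hf, incidenceVector]
    abel

lemma exists_isCirculation_of_reflTransGen {R : Finset (C × C)} {y y' : C}
    (hp : (y, y') ∈ R) (h : Relation.ReflTransGen (fun a b => (a, b) ∈ R) y' y) :
    ∃ f, IsCirculation R f ∧ 0 < f (y, y') := by
  obtain ⟨f, hf0, hf⟩ := exists_nonneg_weights_of_reflTransGen h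
  refine ⟨f + Pi.single (y, y') 1, ⟨add_nonneg hf0 (Pi.single_nonneg.2 zero_le_one), ?_⟩, ?_⟩
  · rw [sum_add_single_smul hp, hf, incidenceVector]
    abel
  · simpa using add_pos_of_nonneg_of_pos (hf0 (y, y')) one_pos

lemma sum_smul_incidenceVector_mem_incidenceSpan (E : Finset (C × C)) (f : C × C → ℝ) :
    ∑ q ∈ E, f q • incidenceVector q ∈ incidenceSpan E :=
  Submodule.sum_mem _ fun _ hq =>
    Submodule.smul_mem _ _ (Submodule.subset_span (Set.mem_image_of_mem _ hq))

lemma sum_smul_incidenceVector_eq_zero_of_iSupIndep {R : Finset (C × C)}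
    {D : Finset (Finset (C × C))} (hD : IsDecompositionOf R D)
    (hindep : iSupIndep fun E : {E // E ∈ D} => incidenceSpan (E : Finset (C × C)))
    {f : C × C → ℝ} (hf : ∑ q ∈ R, f q • incidenceVector q = 0) :
    ∀ E ∈ D, ∑ q ∈ E, f q • incidenceVector q = 0 := by
  have hblocks : ∑ E ∈ D, ∑ q ∈ E, f q • incidenceVector q = 0 := by
    rw [← hf, ← hD.2.2, sup_eq_biUnion]
    exact (sum_biUnion hD.2.1).symm
  intro E hE
  refine (iSupIndep_iff_finsetSum_eq_zero_imp_eq_zero _).1 hindep univ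
    (fun E => ∑ q ∈ (E : Finset (C × C)), f q • incidenceVector q)
    (fun E _ => sum_smul_incidenceVector_mem_incidenceSpan E.1 f) ?_ ⟨E, hE⟩ (mem_univ _)
  rwa [sum_coe_sort D fun E => ∑ q ∈ E, f q • incidenceVector q]

theorem reflTransGen_of_isCirculation [Fintype C] {E : Finset (C × C)} {f : C × C → ℝ}
    (hf : IsCirculation E f) {y y' : C} (hp : (y, y') ∈ E) (hpos : 0 < f (y, y')) :
    Relation.ReflTransGen (fun a b => (a, b) ∈ E) y' y := by
  classical
  by_contra hy
  set S : Finset C := univ.filter (Relation.ReflTransGen (fun a b => (a, b) ∈ E) y')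
  let inflow : C × C → ℝ := fun q =>
    f q * ((if q.2 ∈ S then 1 else 0) - (if q.1 ∈ S then 1 else 0))
  have hnet : ∑ q ∈ E, inflow q = 0 := by
    have := congrArg (fun x : C → ℝ => ∑ c ∈ S, x c) hf.2
    simpa only [Finset.sum_apply, Pi.smul_apply, smul_eq_mul, ← mul_sum, sum_comm (s := S),
      sum_incidenceVector_apply, Pi.zero_apply, sum_const_zero] using this
  have hnonneg : ∀ q ∈ E, 0 ≤ inflow q := by
    intro q hq
    by_cases h1 : q.1 ∈ S
    · have h2 : q.2 ∈ S := by
        simp only [S, mem_filter, mem_univ, true_and] at h1 ⊢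
        exact h1.tail hq
      simp [inflow, h1, h2]
    · simp only [inflow, h1, if_false, sub_zero]
      exact mul_nonneg (hf.1 q) (by split_ifs <;> norm_num)
  have hy' : y' ∈ S := by simp [S, Relation.ReflTransGen.refl]
  have hyS : y ∉ S := by simpa [S] using hy
  have hin : inflow (y, y') = 0 := (sum_eq_zero_iff_of_nonneg hnonneg).1 hnet (y, y') hp
  simp only [inflow, hy', hyS, if_true, if_false, sub_zero, mul_one] at hin
  exact hpos.ne' hin

end

theorem weaklyReversible_of_incidenceIndependent_general
    {C : Type*} [Fintype C] [DecidableEq C]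
    (R : Finset (C × C))
    (hWR : WeaklyReversible R) (D : Finset (Finset (C × C)))
    (hD : IsDecompositionOf R D) (hInc : IsIncidenceIndependent R D) :
    ∀ E ∈ D, WeaklyReversible E := by
  rintro E hE ⟨y, y'⟩ hp
  have hpR : (y, y') ∈ R := hD.2.2 ▸ le_sup (f := id) hE hp
  obtain ⟨f, ⟨hf0, hfR⟩, hpos⟩ := exists_isCirculation_of_reflTransGen hpR (hWR _ hpR)
  exact reflTransGen_of_isCirculation
    ⟨hf0, sum_smul_incidenceVector_eq_zero_of_iSupIndep hD hInc.1 hfR E hE⟩ hp hpos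

/-- If `R` is weakly reversible and `{R₁, …, R_k}` is an incidence independent
decomposition of `R`, then each `Rᵢ` is weakly reversible. -/
theorem weaklyReversible_of_incidenceIndependent
    {C : Type*} [Fintype C] [DecidableEq C]
    (R : Finset (C × C)) (hloop : ∀ y : C, (y, y) ∉ R)
    (hWR : WeaklyReversible R) (D : Finset (Finset (C × C)))
    (hD : IsDecompositionOf R D) (hInc : IsIncidenceIndependent R D) :
    ∀ E ∈ D, WeaklyReversible E :=
  weaklyReversible_of_incidenceIndependent_general R hWR D hD hInc
end

section
/- Let C be a finite set of complexes and R ⊆ C × C a finite reaction set with (y, y) ∉ R for all y ∈ C. Let {R_1, R_2} be a decomposition of R, and for i = 1, 2 let C_i be the set of complexes occurring as a source or target of some reaction in R_i. If C_1 ∩ C_2 has exactly one element (the two subnetworks have just a single complex in common), then the decomposition {R_1, R_2} is incidence independent. -/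
/-- The complexes occurring as a source or target of some reaction in `E`. -/
def complexesOf {C : Type*} [DecidableEq C] (E : Finset (C × C)) : Finset C :=
  E.image Prod.fst ∪ E.image Prod.snd

/-- The linear map summing all coordinates. -/
def coordSum (C : Type*) [Fintype C] : (C → ℝ) →ₗ[ℝ] ℝ where
  toFun v := ∑ x, v x
  map_add' a b := by simp [Finset.sum_add_distrib]
  map_smul' c v := by simp [Finset.mul_sum]

/-- The submodule of functions supported in `S`. -/
def suppIn {C : Type*} (S : Finset C) : Submodule ℝ (C → ℝ) where
  carrier := {v | ∀ x ∉ S, v x = 0}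
  add_mem' ha hb x hx := by simp [ha x hx, hb x hx]
  zero_mem' x hx := rfl
  smul_mem' c v hv x hx := by simp [hv x hx]

lemma incidenceSpan_sum_zero {C : Type*} [Fintype C] [DecidableEq C]
    (E : Finset (C × C)) {v : C → ℝ} (hv : v ∈ incidenceSpan E) : ∑ x, v x = 0 := by
  have h : incidenceSpan E ≤ LinearMap.ker (coordSum C) := by
    rw [incidenceSpan, Submodule.span_le]
    rintro _ ⟨p, hp, rfl⟩
    simp [LinearMap.mem_ker, coordSum, Finset.sum_sub_distrib, Finset.sum_pi_single]
  exact h hv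

lemma incidenceSpan_supp {C : Type*} [DecidableEq C]
    (E : Finset (C × C)) {v : C → ℝ} (hv : v ∈ incidenceSpan E) :
    ∀ x ∉ complexesOf E, v x = 0 := by
  have h : incidenceSpan E ≤ suppIn (complexesOf E) := by
    rw [incidenceSpan, Submodule.span_le]
    rintro _ ⟨p, hp, rfl⟩ x hx
    have h1 : x ≠ p.1 := by
      rintro rfl
      exact hx (Finset.mem_union_left _ (Finset.mem_image_of_mem Prod.fst hp))
    have h2 : x ≠ p.2 := by
      rintro rfl
      exact hx (Finset.mem_union_right _ (Finset.mem_image_of_mem Prod.snd hp))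
    simp [Pi.single_eq_of_ne h1, Pi.single_eq_of_ne h2]
  exact h hv

lemma disjoint_incidenceSpan {C : Type*} [Fintype C] [DecidableEq C]
    (R₁ R₂ : Finset (C × C))
    (hcommon : (complexesOf R₁ ∩ complexesOf R₂).card = 1) :
    Disjoint (incidenceSpan R₁) (incidenceSpan R₂) := by
  obtain ⟨c, hc⟩ := Finset.card_eq_one.mp hcommon
  rw [Submodule.disjoint_def]
  intro v h1 h2
  have hoff : ∀ x, x ≠ c → v x = 0 := by
    intro x hx
    have : x ∉ complexesOf R₁ ∩ complexesOf R₂ := by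
      rw [hc]; simpa using hx
    by_cases hx1 : x ∈ complexesOf R₁
    · have hx2 : x ∉ complexesOf R₂ := fun h => this (Finset.mem_inter.mpr ⟨hx1, h⟩)
      exact incidenceSpan_supp R₂ h2 x hx2
    · exact incidenceSpan_supp R₁ h1 x hx1
  have hsum := incidenceSpan_sum_zero R₁ h1
  have : ∑ x, v x = v c := Finset.sum_eq_single c (fun b _ hb => hoff b hb) (by simp)
  funext x
  by_cases hx : x = c
  · subst hx; rw [← this, hsum]; rfl
  · exact hoff x hx

/-- If `{R₁, R₂}` is a decomposition of `R` and the two subnetworks have exactly one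
complex in common, then the decomposition is incidence independent. -/
theorem incidenceIndependent_of_single_common_complex
    {C : Type*} [Fintype C] [DecidableEq C]
    (R R₁ R₂ : Finset (C × C)) (hloop : ∀ y : C, (y, y) ∉ R)
    (hD : IsDecompositionOf R {R₁, R₂}) (hne : R₁ ≠ R₂)
    (hcommon : (complexesOf R₁ ∩ complexesOf R₂).card = 1) :
    IsIncidenceIndependent R {R₁, R₂} := by
  obtain ⟨-, -, hsup⟩ := hD
  have hdisj := disjoint_incidenceSpan R₁ R₂ hcommon
  have hmem1 : R₁ ∈ ({R₁, R₂} : Finset (Finset (C × C))) := by simp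
  have hmem2 : R₂ ∈ ({R₁, R₂} : Finset (Finset (C × C))) := by simp
  have hcases : ∀ E : {E // E ∈ ({R₁, R₂} : Finset (Finset (C × C)))},
      (E : Finset (C × C)) = R₁ ∨ (E : Finset (C × C)) = R₂ := by
    rintro ⟨E, hE⟩
    simpa using hE
  constructor
  · intro i
    rcases hcases i with hi | hi
    · refine Disjoint.mono_right ?_ (hi ▸ hdisj)
      apply iSup_le
      intro j
      apply iSup_le
      intro hj
      rcases hcases j with h | h
      · exact absurd (Subtype.ext (h.trans hi.symm)) hj
      · exact le_of_eq (congrArg incidenceSpan h)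
    · refine Disjoint.mono_right ?_ (hi ▸ hdisj.symm)
      apply iSup_le
      intro j
      apply iSup_le
      intro hj
      rcases hcases j with h | h
      · exact le_of_eq (congrArg incidenceSpan h)
      · exact absurd (Subtype.ext (h.trans hi.symm)) hj
  · have hR : R = R₁ ∪ R₂ := by
      rw [← hsup]; simp [Finset.sup_insert, Finset.sup_singleton]
    have hspanR : incidenceSpan R = incidenceSpan R₁ ⊔ incidenceSpan R₂ := by
      rw [hR, incidenceSpan, incidenceSpan, incidenceSpan, ← Submodule.span_union,
        ← Set.image_union]
      congr 1
      congr 1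
      simp
    rw [hspanR]
    apply le_antisymm
    · apply iSup_le
      intro i
      rcases hcases i with hi | hi
      · rw [hi]; exact le_sup_left
      · rw [hi]; exact le_sup_right
    · exact sup_le (le_iSup_of_le ⟨R₁, hmem1⟩ le_rfl) (le_iSup_of_le ⟨R₂, hmem2⟩ le_rfl)
end
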